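/- arXiv:1803.05652 — 6 statements merged into one kernel-verified Lean document; each statement's English description precedes it below -/
import Mathlib

section
/- Let n ≥ 1 be an integer, let S ⊆ [n] = {1, …, n}, and let 0 < α < 1. Then the number of nodes v ∈ [n] ∖ S that are α-good under S is at least n − |S|·(2 − α)/α. -/
/-!
A node outside `S` fails to be `α`-good exactly when some window `[v, v+r-1]` or `[v-r+1, v]`
holds more than `α r` points of `S`, and every point of `S` has such windows on both sides
(take `r = 1`). Nodes with a dense right window are covered greedily: the leftmost one has a
dense window `I`, every such node right of `I` still has one for `S` cut to the right of `I`,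
so at most `|S ∩ I| / α` of them lie in `I`, and in total at most `|S| / α`; the left case is
the same argument in the reversed order. By inclusion–exclusion at most
`2|S|/α - |S| = |S|(2 - α)/α` nodes of `[n]` are not good.
-/

/-- A node `v` is `α`-good under `S`: `v ∉ S` and for every radius `r ≥ 1`,
each of the intervals `[v-r+1, v]` and `[v, v+r-1]` contains at most `α·r`
elements of `S` (intervals clipped within the positive integers). -/
def AlphaGood (S : Finset ℕ) (α : ℝ) (v : ℕ) : Prop :=
  v ∉ S ∧ ∀ r : ℕ, 1 ≤ r →
    ((Finset.Icc (v - r + 1) v ∩ S).card : ℝ) ≤ α * r ∧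
    ((Finset.Icc v (v + r - 1) ∩ S).card : ℝ) ≤ α * r

open Finset

section DenseWindows

variable {X : Type*} [LinearOrder X] [LocallyFiniteOrder X] {c : ℝ}

theorem mul_card_le_card_of_forall_dense_Icc_right (hc : 0 ≤ c) (B S : Finset X)
    (hB : ∀ v ∈ B, ∃ w, c * #(Icc v w) < #(Icc v w ∩ S)) : c * #B ≤ #S := by
  induction B using Finset.strongInduction generalizing S with
  | H B ih =>
  rcases B.eq_empty_or_nonempty with rfl | hne
  · simp
  set a := B.min' hne
  obtain ⟨w, hw⟩ := hB a (B.min'_mem hne)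
  have haw : a ≤ w := by
    by_contra! h
    simp [Icc_eq_empty_of_lt h] at hw
  set B' := B.filter (w < ·)
  set S' := S.filter (w < ·)
  have hB'B : B' ⊂ B := filter_ssubset.2 ⟨a, B.min'_mem hne, not_lt.2 haw⟩
  have hB' : ∀ v ∈ B', ∃ w', c * #(Icc v w') < #(Icc v w' ∩ S') := by
    intro v hv
    obtain ⟨w', hw'⟩ := hB v (mem_filter.1 hv).1
    refine ⟨w', ?_⟩
    have hwv := (mem_filter.1 hv).2
    rwa [inter_filter, filter_true_of_mem fun x hx => hwv.trans_le (mem_Icc.1 (mem_inter.1 hx).1).1]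
  have hcover : #B ≤ #(Icc a w) + #B' := by
    refine (card_le_card fun v hv => ?_).trans (card_union_le _ _)
    rcases le_or_gt v w with hvw | hwv
    · exact mem_union_left _ (mem_Icc.2 ⟨B.min'_le v hv, hvw⟩)
    · exact mem_union_right _ (mem_filter.2 ⟨hv, hwv⟩)
  have hsplit : #(Icc a w ∩ S) + #S' ≤ #S := by
    rw [← card_union_of_disjoint]
    · exact card_le_card (union_subset inter_subset_right (filter_subset _ _))
    · exact disjoint_left.2 fun x hx hx' =>
        (mem_filter.1 hx').2.not_ge (mem_Icc.1 (mem_inter.1 hx).1).2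
  have hrest := ih B' hB'B S' hB'
  calc c * #B ≤ c * #(Icc a w) + c * #B' := by
        rw [← mul_add]; exact mul_le_mul_of_nonneg_left (by exact_mod_cast hcover) hc
    _ ≤ #S := by
        have : (#(Icc a w ∩ S) : ℝ) + #S' ≤ #S := by exact_mod_cast hsplit
        linarith

theorem mul_card_le_card_of_forall_dense_Icc_left (hc : 0 ≤ c) (B S : Finset X)
    (hB : ∀ v ∈ B, ∃ u, c * #(Icc u v) < #(Icc u v ∩ S)) : c * #B ≤ #S := by
  have := mul_card_le_card_of_forall_dense_Icc_right (X := Xᵒᵈ) hc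
    (B.map OrderDual.toDual.toEmbedding) (S.map OrderDual.toDual.toEmbedding) ?_
  · simpa using this
  intro v hv
  obtain ⟨v, hvB, rfl⟩ := mem_map.1 hv
  obtain ⟨u, hu⟩ := hB v hvB
  refine ⟨OrderDual.toDual u, ?_⟩
  rw [Equiv.toEmbedding_apply, Icc_toDual, ← map_inter, card_map, card_map]
  exact hu

end DenseWindows

def HasDenseRightWindow (S : Finset ℕ) (α : ℝ) (v : ℕ) : Prop :=
  ∃ r, 1 ≤ r ∧ α * r < #(Icc v (v + r - 1) ∩ S)

def HasDenseLeftWindow (S : Finset ℕ) (α : ℝ) (v : ℕ) : Prop :=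
  ∃ r, 1 ≤ r ∧ α * r < #(Icc (v - r + 1) v ∩ S)

section Windows

variable {S : Finset ℕ} {α : ℝ} {v : ℕ}

theorem hasDenseRightWindow_of_mem (hα : α < 1) (hv : v ∈ S) : HasDenseRightWindow S α v :=
  ⟨1, le_rfl, by simp [singleton_inter_of_mem hv, hα]⟩

theorem hasDenseLeftWindow_of_mem (hα : α < 1) (hv : v ∈ S) (hv0 : 0 < v) :
    HasDenseLeftWindow S α v :=
  ⟨1, le_rfl, by simp [Nat.sub_add_cancel hv0, singleton_inter_of_mem hv, hα]⟩

theorem alphaGood_iff (hα : α < 1) :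
    AlphaGood S α v ↔ ¬HasDenseLeftWindow S α v ∧ ¬HasDenseRightWindow S α v := by
  simp only [HasDenseLeftWindow, HasDenseRightWindow, not_exists, not_and, not_lt]
  constructor
  · rintro ⟨-, h⟩
    exact ⟨fun r hr => (h r hr).1, fun r hr => (h r hr).2⟩
  · rintro ⟨hL, hR⟩
    refine ⟨fun hv => ?_, fun r hr => ⟨hL r hr, hR r hr⟩⟩
    obtain ⟨r, hr, hdense⟩ := hasDenseRightWindow_of_mem (S := S) hα hv
    exact (hR r hr).not_gt hdense

open Classical in
theorem mul_card_filter_hasDenseRightWindow_le (hα : 0 ≤ α) (U : Finset ℕ) :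
    α * #(U.filter (HasDenseRightWindow S α)) ≤ #S := by
  refine mul_card_le_card_of_forall_dense_Icc_right hα _ _ fun v hv => ?_
  obtain ⟨r, hr, hdense⟩ := (mem_filter.1 hv).2
  refine ⟨v + r - 1, ?_⟩
  rwa [Nat.card_Icc, show v + r - 1 + 1 - v = r by omega]

open Classical in
theorem mul_card_filter_hasDenseLeftWindow_le (hα : 0 ≤ α) (U : Finset ℕ) :
    α * #(U.filter (HasDenseLeftWindow S α)) ≤ #S := by
  refine mul_card_le_card_of_forall_dense_Icc_left hα _ _ fun v hv => ?_
  obtain ⟨r, hr, hdense⟩ := (mem_filter.1 hv).2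
  refine ⟨v - r + 1, lt_of_le_of_lt ?_ hdense⟩
  gcongr
  rw [Nat.card_Icc]
  omega

end Windows

theorem alphaGood_count_general (n : ℕ) (S : Finset ℕ) (hS : S ⊆ Finset.Icc 1 n)
    (α : ℝ) (hα0 : 0 < α) (hα1 : α < 1) :
    (n : ℝ) - S.card * (2 - α) / α ≤
      ({v : ℕ | v ∈ Finset.Icc 1 n ∧ AlphaGood S α v} : Set ℕ).ncard := by
  classical
  set L := (Icc 1 n).filter (HasDenseLeftWindow S α)
  set R := (Icc 1 n).filter (HasDenseRightWindow S α)
  have hgood : {v | v ∈ Icc 1 n ∧ AlphaGood S α v} = ↑(Icc 1 n \ (L ∪ R)) := by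
    ext v
    simp only [Set.mem_ofPred_eq, mem_coe, mem_sdiff, mem_union, mem_filter, L, R, alphaGood_iff hα1]
    tauto
  have hSLR : S ⊆ L ∩ R := fun v hv =>
    have hvn := hS hv
    mem_inter.2 ⟨mem_filter.2 ⟨hvn, hasDenseLeftWindow_of_mem hα1 hv (mem_Icc.1 hvn).1⟩,
      mem_filter.2 ⟨hvn, hasDenseRightWindow_of_mem hα1 hv⟩⟩
  have hLR : (#(L ∪ R) : ℝ) + #S ≤ #L + #R := by
    exact_mod_cast card_union_add_card_inter L R ▸ Nat.add_le_add_left (card_le_card hSLR) _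
  have hn : (n : ℝ) ≤ #(Icc 1 n \ (L ∪ R)) + #(L ∪ R) := by
    have := card_le_card_sdiff_add_card (s := Icc 1 n) (t := L ∪ R)
    rw [Nat.card_Icc, Nat.add_sub_cancel] at this
    exact_mod_cast this
  have hL := mul_card_filter_hasDenseLeftWindow_le hα0.le (S := S) (Icc 1 n)
  have hR := mul_card_filter_hasDenseRightWindow_le hα0.le (S := S) (Icc 1 n)
  rw [hgood, Set.ncard_coe_finset, sub_le_comm, le_div_iff₀ hα0]
  calc ((n : ℝ) - #(Icc 1 n \ (L ∪ R))) * α ≤ (#L + #R - #S) * α :=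
        mul_le_mul_of_nonneg_right (by linarith) hα0.le
    _ = α * #L + α * #R - α * #S := by ring
    _ ≤ #S * (2 - α) := by linarith

/-- At least `n - |S|·(2-α)/α` of the nodes in `[n] \ S` are `α`-good under `S`. -/
theorem alphaGood_count (n : ℕ) (hn : 1 ≤ n) (S : Finset ℕ) (hS : S ⊆ Finset.Icc 1 n)
    (α : ℝ) (hα0 : 0 < α) (hα1 : α < 1) :
    (n : ℝ) - S.card * (2 - α) / α ≤
      ({v : ℕ | v ∈ Finset.Icc 1 n ∧ AlphaGood S α v} : Set ℕ).ncard :=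
  alphaGood_count_general n S hS α hα0 hα1
end

section
/- For every δ > 0 there exists a constant c > 0 such that for every integer n ≥ 2 there exists a DAG G on [n] that is a δ-local expander and in which every node has at most c·log₂ n incoming edges and at most c·log₂ n outgoing edges. -/
/-!
The DAG has two kinds of edges: all edges of length at most `D = O(1/δ)`, and, for every scale
`b = 2 ^ k ≤ n`, a copy of a fixed bipartite `δ/2`-expander `H k` of constant degree `d` between
every two aligned blocks of length `b` at block distance at most `D`. A vertex lies in one block
per scale, so its degrees are `O(D + D d log n)`.

For expansion at radius `r`, short edges suffice when `2 r ≤ D`. Otherwise, at the scale with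
`4 b ≤ δ r < 8 b`, both `W` and `X` have density `δ/2` in some full block, the two blocks are at
block distance at most `D`, and the copy of `H k` between them provides the edge.

The expanders are unions of `d` permutations of `Fin b`: counting permutations that map an
`s`-set into the complement of another `s`-set shows that for `d ≥ 16 / δ ^ 2` some choice of
permutations meets every pair of `s`-sets, `s = ⌈δ b / 2⌉`.
-/

/-- A DAG given by an edge set `E` on `[n]` has `δ`-local expansion around node `v`. -/
def LocalExpansionE (n : ℕ) (E : Finset (ℕ × ℕ)) (δ : ℝ) (v : ℕ) : Prop :=
  ∀ r : ℕ, 1 ≤ r →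
    (v + 2 * r - 1 ≤ n →
      ∀ W ⊆ Finset.Icc v (v + r - 1), ∀ X ⊆ Finset.Icc (v + r) (v + 2 * r - 1),
        δ * r ≤ (W.card : ℝ) → δ * r ≤ (X.card : ℝ) →
          ∃ a ∈ W, ∃ b ∈ X, (a, b) ∈ E) ∧
    (2 * r ≤ v →
      ∀ Y ⊆ Finset.Icc (v - r + 1) v, ∀ Z ⊆ Finset.Icc (v - 2 * r + 1) (v - r),
        δ * r ≤ (Y.card : ℝ) → δ * r ≤ (Z.card : ℝ) →
          ∃ a ∈ Z, ∃ b ∈ Y, (a, b) ∈ E)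

open Finset
open scoped Nat

section PermutationCounting

variable {α : Type*} [Fintype α] [DecidableEq α]

theorem card_perm_image_eq_le (S R : Finset α) (hRS : #R = #S) :
    #{π : Equiv.Perm α | S.image π = R} ≤ (#S)! * (Fintype.card α - #S)! := by
  set F := ({π : Equiv.Perm α | S.image π = R} : Finset (Equiv.Perm α))
  have maps_in (π : F) : ∀ ⦃x⦄, x ∈ S → π.1 x ∈ R := fun x hx =>
    (mem_filter.mp π.2).2 ▸ mem_image_of_mem _ hx
  have maps_out (π : F) : ∀ ⦃x⦄, x ∈ Sᶜ → π.1 x ∈ Rᶜ := fun x hx => by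
    rw [mem_compl, ← (mem_filter.mp π.2).2, mem_image]
    rintro ⟨y, hy, hxy⟩
    exact mem_compl.mp hx (π.1.injective hxy ▸ hy)
  let restrict (π : F) :
      ({x // x ∈ S} ↪ {x // x ∈ R}) × ({x // x ∈ Sᶜ} ↪ {x // x ∈ Rᶜ}) :=
    (π.1.toEmbedding.subtypeMap (maps_in π), π.1.toEmbedding.subtypeMap (maps_out π))
  have restrict_injective : Function.Injective restrict := by
    intro π σ h
    ext x
    by_cases hx : x ∈ S
    · exact congrArg Subtype.val (DFunLike.congr_fun (congrArg Prod.fst h) ⟨x, hx⟩)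
    · exact congrArg Subtype.val
        (DFunLike.congr_fun (congrArg Prod.snd h) ⟨x, mem_compl.mpr hx⟩)
  calc #F = Fintype.card F := (Fintype.card_coe F).symm
    _ ≤ _ := Fintype.card_le_of_injective restrict restrict_injective
    _ = (#S)! * (Fintype.card α - #S)! := by
      simp only [Fintype.card_prod, Fintype.card_embedding_eq, Fintype.card_coe, card_compl, hRS,
        Nat.descFactorial_self]

theorem card_perm_mapsTo_compl_le (S T : Finset α) :
    #{π : Equiv.Perm α | ∀ x ∈ S, π x ∉ T} ≤
      (Fintype.card α - #T).descFactorial #S * (Fintype.card α - #S)! := by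
  have cover : ({π : Equiv.Perm α | ∀ x ∈ S, π x ∉ T} : Finset _) ⊆
      (Tᶜ.powersetCard #S).biUnion fun R => {π : Equiv.Perm α | S.image π = R} := by
    intro π hπ
    refine mem_biUnion.mpr ⟨S.image π, mem_powersetCard.mpr ⟨?_, ?_⟩, by simp⟩
    · simpa [subset_iff] using (mem_filter.mp hπ).2
    · exact card_image_of_injective _ π.injective
  calc _ ≤ _ := card_le_card cover
    _ ≤ ∑ R ∈ Tᶜ.powersetCard #S, #{π : Equiv.Perm α | S.image π = R} := card_biUnion_le
    _ ≤ ∑ R ∈ Tᶜ.powersetCard #S, (#S)! * (Fintype.card α - #S)! :=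
      sum_le_sum fun R hR => card_perm_image_eq_le S R (mem_powersetCard.mp hR).2
    _ = _ := by
      rw [sum_const, card_powersetCard, card_compl, smul_eq_mul, ← mul_assoc,
        Nat.descFactorial_eq_factorial_mul_choose, mul_comm (#S)!]

theorem card_perm_tuple_mapsTo_compl_le {ι : Type*} [Fintype ι] [DecidableEq ι] (s : ℕ) :
    #{ω : ι → Equiv.Perm α |
        ∃ S T : Finset α, #S = s ∧ #T = s ∧ ∀ i, ∀ x ∈ S, ω i x ∉ T} ≤
      4 ^ Fintype.card α *
        ((Fintype.card α - s).descFactorial s * (Fintype.card α - s)!) ^ Fintype.card ι := by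
  set pairs := ({ST : Finset α × Finset α | #ST.1 = s ∧ #ST.2 = s} : Finset _)
  have cover : ({ω : ι → Equiv.Perm α |
        ∃ S T : Finset α, #S = s ∧ #T = s ∧ ∀ i, ∀ x ∈ S, ω i x ∉ T} : Finset _) ⊆
      pairs.biUnion fun ST =>
        Fintype.piFinset fun _ => {π : Equiv.Perm α | ∀ x ∈ ST.1, π x ∉ ST.2} := by
    intro ω hω
    obtain ⟨S, T, hS, hT, hST⟩ := (mem_filter.mp hω).2
    exact mem_biUnion.mpr ⟨(S, T), by simp [pairs, hS, hT], by simpa using hST⟩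
  have card_pairs : #pairs ≤ 4 ^ Fintype.card α := by
    calc #pairs ≤ Fintype.card (Finset α × Finset α) := card_le_univ _
      _ = 4 ^ Fintype.card α := by
        rw [Fintype.card_prod, Fintype.card_finset, ← mul_pow]; rfl
  calc _ ≤ _ := card_le_card cover
    _ ≤ ∑ _ ∈ pairs, ((Fintype.card α - s).descFactorial s * (Fintype.card α - s)!) ^
          Fintype.card ι := by
      refine card_biUnion_le.trans (sum_le_sum fun ST hST => ?_)
      obtain ⟨hS, hT⟩ := (mem_filter.mp hST).2
      rw [Fintype.card_piFinset, prod_const, Finset.card_univ]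
      refine Nat.pow_le_pow_left ?_ _
      simpa only [hS, hT] using card_perm_mapsTo_compl_le ST.1 ST.2
    _ ≤ _ := by
      rw [sum_const, smul_eq_mul]
      exact Nat.mul_le_mul_right _ card_pairs

end PermutationCounting

theorem descFactorial_mul_pow_le_pow_mul_descFactorial {m b : ℕ} (h : m ≤ b) :
    ∀ k, m.descFactorial k * b ^ k ≤ m ^ k * b.descFactorial k
  | 0 => by simp
  | k + 1 => by
    have step : (m - k) * b ≤ m * (b - k) := by
      rcases le_or_gt m k with hmk | hkm
      · simp [Nat.sub_eq_zero_of_le hmk]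
      · zify [hkm.le, hkm.le.trans h]
        nlinarith
    calc m.descFactorial (k + 1) * b ^ (k + 1)
        = ((m - k) * b) * (m.descFactorial k * b ^ k) := by
          rw [Nat.descFactorial_succ, pow_succ]; ring
      _ ≤ (m * (b - k)) * (m ^ k * b.descFactorial k) :=
          Nat.mul_le_mul step (descFactorial_mul_pow_le_pow_mul_descFactorial h k)
      _ = m ^ (k + 1) * b.descFactorial (k + 1) := by
          rw [Nat.descFactorial_succ, pow_succ]; ring

open Real in
theorem descFactorial_sub_le_exp_mul_descFactorial {b s : ℕ} (hb : 0 < b) (hsb : s ≤ b) :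
    ((b - s).descFactorial s : ℝ) ≤ exp (-(s ^ 2 / b)) * b.descFactorial s := by
  have hbR : (0 : ℝ) < b := by exact_mod_cast hb
  have sub_le : ((b - s : ℕ) : ℝ) ≤ b * exp (-(s / b)) := by
    calc ((b - s : ℕ) : ℝ) = b * (-(s / b) + 1) := by
          rw [Nat.cast_sub hsb]; field_simp; ring
      _ ≤ b * exp (-(s / b)) := by gcongr; exact add_one_le_exp _
  refine le_of_mul_le_mul_right ?_ (pow_pos hbR s)
  calc ((b - s).descFactorial s : ℝ) * b ^ s
        ≤ ((b - s : ℕ) : ℝ) ^ s * b.descFactorial s := by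
        exact_mod_cast descFactorial_mul_pow_le_pow_mul_descFactorial (Nat.sub_le b s) s
    _ ≤ (b * exp (-(s / b))) ^ s * b.descFactorial s := by gcongr
    _ = exp (-(s ^ 2 / b)) * b.descFactorial s * b ^ s := by
      rw [mul_pow, ← exp_nat_mul]; ring_nf

open Real in
theorem four_pow_mul_pow_lt_factorial_pow {b s d : ℕ} (hb : 0 < b) (hsb : s ≤ b)
    (hsd : 4 * b ^ 2 ≤ s ^ 2 * d) :
    4 ^ b * ((b - s).descFactorial s * (b - s)!) ^ d < b ! ^ d := by
  have hbR : (0 : ℝ) < b := by exact_mod_cast hb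
  have four_pow_lt : (4 : ℝ) ^ b < exp (s ^ 2 * d / b) :=
    calc (4 : ℝ) ^ b < exp 4 ^ b :=
          pow_lt_pow_left₀ (by linarith [add_one_le_exp 4]) (by norm_num) hb.ne'
      _ = exp (4 * b) := by rw [← exp_nat_mul]; ring_nf
      _ ≤ exp (s ^ 2 * d / b) := by
          rw [exp_le_exp, le_div_iff₀ hbR]
          exact_mod_cast (show 4 * b * b ≤ s ^ 2 * d by rw [mul_assoc, ← sq]; exact hsd)
  have avoiding_le : ((b - s).descFactorial s * (b - s)! : ℝ) ≤ exp (-(s ^ 2 / b)) * b ! := by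
    rw [← Nat.factorial_mul_descFactorial hsb, Nat.cast_mul, mul_comm ((b - s)! : ℝ),
      ← mul_assoc]
    gcongr
    exact descFactorial_sub_le_exp_mul_descFactorial hb hsb
  have : ((4 ^ b * ((b - s).descFactorial s * (b - s)!) ^ d : ℕ) : ℝ) < (b ! ^ d : ℕ) := by
    push_cast
    calc (4 : ℝ) ^ b * ((b - s).descFactorial s * (b - s)! : ℝ) ^ d
        ≤ 4 ^ b * (exp (-(s ^ 2 / b)) * b !) ^ d := by gcongr
      _ = 4 ^ b * exp (-(s ^ 2 * d / b)) * (b ! : ℝ) ^ d := by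
        rw [mul_pow, ← exp_nat_mul]; ring_nf
      _ < exp (s ^ 2 * d / b) * exp (-(s ^ 2 * d / b)) * (b ! : ℝ) ^ d := by gcongr
      _ = (b ! : ℝ) ^ d := by rw [← exp_add, add_neg_cancel, exp_zero, one_mul]
  exact_mod_cast this

theorem exists_perm_tuple_hitting {α ι : Type*} [Fintype α] [DecidableEq α] [Fintype ι]
    [DecidableEq ι] {s : ℕ} (hα : 0 < Fintype.card α) (hsα : s ≤ Fintype.card α)
    (hsι : 4 * Fintype.card α ^ 2 ≤ s ^ 2 * Fintype.card ι) :
    ∃ ω : ι → Equiv.Perm α,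
      ∀ S T : Finset α, #S = s → #T = s → ∃ i, ∃ x ∈ S, ω i x ∈ T := by
  by_contra! h
  have := card_perm_tuple_mapsTo_compl_le (α := α) (ι := ι) s
  rw [filter_true_of_mem fun ω _ => h ω, Finset.card_univ, Fintype.card_fun,
    Fintype.card_perm] at this
  exact this.not_gt (four_pow_mul_pow_lt_factorial_pow hα hsα hsι)

def outDegree (E : Finset (ℕ × ℕ)) (v : ℕ) : ℕ := #{e ∈ E | e.1 = v}

def inDegree (E : Finset (ℕ × ℕ)) (v : ℕ) : ℕ := #{e ∈ E | e.2 = v}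

theorem outDegree_union_le (E F : Finset (ℕ × ℕ)) (v : ℕ) :
    outDegree (E ∪ F) v ≤ outDegree E v + outDegree F v := by
  unfold outDegree; rw [filter_union]; exact card_union_le _ _

theorem inDegree_union_le (E F : Finset (ℕ × ℕ)) (v : ℕ) :
    inDegree (E ∪ F) v ≤ inDegree E v + inDegree F v := by
  unfold inDegree; rw [filter_union]; exact card_union_le _ _

theorem outDegree_biUnion_le {ι : Type*} [DecidableEq ι] (s : Finset ι)
    (E : ι → Finset (ℕ × ℕ)) (v : ℕ) :
    outDegree (s.biUnion E) v ≤ ∑ i ∈ s, outDegree (E i) v := by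
  unfold outDegree; rw [filter_biUnion]; exact card_biUnion_le

theorem inDegree_biUnion_le {ι : Type*} [DecidableEq ι] (s : Finset ι)
    (E : ι → Finset (ℕ × ℕ)) (v : ℕ) :
    inDegree (s.biUnion E) v ≤ ∑ i ∈ s, inDegree (E i) v := by
  unfold inDegree; rw [filter_biUnion]; exact card_biUnion_le

theorem outDegree_le_card {β : Type*} {E : Finset (ℕ × ℕ)} {v : ℕ} {t : Finset β}
    (f : ℕ → β) (hf : f.Injective) (h : ∀ e ∈ E, e.1 = v → f e.2 ∈ t) :
    outDegree E v ≤ #t := by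
  refine card_le_card_of_injOn (f ∘ Prod.snd) (fun e he => ?_) fun e he e' he' hee' => ?_
  · obtain ⟨he, hv⟩ := mem_filter.mp he
    exact h e he hv
  · exact Prod.ext ((mem_filter.mp he).2.trans (mem_filter.mp he').2.symm) (hf hee')

theorem inDegree_le_card {β : Type*} {E : Finset (ℕ × ℕ)} {v : ℕ} {t : Finset β}
    (f : ℕ → β) (hf : f.Injective) (h : ∀ e ∈ E, e.2 = v → f e.1 ∈ t) :
    inDegree E v ≤ #t := by
  refine card_le_card_of_injOn (f ∘ Prod.fst) (fun e he => ?_) fun e he e' he' hee' => ?_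
  · obtain ⟨he, hv⟩ := mem_filter.mp he
    exact h e he hv
  · exact Prod.ext (hf hee') ((mem_filter.mp he).2.trans (mem_filter.mp he').2.symm)

def permEdges {b : ℕ} (π : Equiv.Perm (Fin b)) : Finset (ℕ × ℕ) :=
  univ.image fun x : Fin b => ((x : ℕ), (π x : ℕ))

theorem outDegree_permEdges_le_one {b : ℕ} (π : Equiv.Perm (Fin b)) (v : ℕ) :
    outDegree (permEdges π) v ≤ 1 := by
  refine card_le_one.mpr fun e he e' he' => ?_
  simp only [permEdges, mem_filter, mem_image, mem_univ, true_and] at he he'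
  obtain ⟨⟨x, rfl⟩, hx⟩ := he
  obtain ⟨⟨y, rfl⟩, hy⟩ := he'
  rw [Fin.ext (hx.trans hy.symm)]

theorem inDegree_permEdges_le_one {b : ℕ} (π : Equiv.Perm (Fin b)) (v : ℕ) :
    inDegree (permEdges π) v ≤ 1 := by
  refine card_le_one.mpr fun e he e' he' => ?_
  simp only [permEdges, mem_filter, mem_image, mem_univ, true_and] at he he'
  obtain ⟨⟨x, rfl⟩, hx⟩ := he
  obtain ⟨⟨y, rfl⟩, hy⟩ := he'
  rw [π.injective (Fin.ext (hx.trans hy.symm))]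

def IsBipartiteExpander (γ : ℝ) (b : ℕ) (H : Finset (ℕ × ℕ)) : Prop :=
  ∀ S ⊆ range b, ∀ T ⊆ range b, γ * b ≤ #S → γ * b ≤ #T →
    ∃ p ∈ H, p.1 ∈ S ∧ p.2 ∈ T

theorem exists_isBipartiteExpander {γ : ℝ} {d b : ℕ} (hγ : 0 < γ) (hγ1 : γ ≤ 1)
    (hd : 4 / γ ^ 2 ≤ d) (hb : 0 < b) :
    ∃ H, (∀ v, outDegree H v ≤ d) ∧ (∀ v, inDegree H v ≤ d) ∧
      IsBipartiteExpander γ b H := by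
  set s := ⌈γ * b⌉₊
  have hbR : (0 : ℝ) < b := by exact_mod_cast hb
  have hsb : s ≤ b := Nat.ceil_le.mpr (by nlinarith)
  have hsd : 4 * b ^ 2 ≤ s ^ 2 * d := by
    have : (4 * b ^ 2 : ℝ) ≤ s ^ 2 * d :=
      calc (4 * b ^ 2 : ℝ) = (γ * b) ^ 2 * (4 / γ ^ 2) := by field_simp
        _ ≤ s ^ 2 * d := by gcongr; exact Nat.le_ceil _
    exact_mod_cast this
  obtain ⟨ω, hω⟩ := exists_perm_tuple_hitting (α := Fin b) (ι := Fin d)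
    (by simpa using hb) (by simpa using hsb) (by simpa using hsd)
  refine ⟨univ.biUnion fun j => permEdges (ω j), fun v => ?_, fun v => ?_, ?_⟩
  · calc _ ≤ ∑ j, outDegree (permEdges (ω j)) v := outDegree_biUnion_le _ _ v
      _ ≤ ∑ _j : Fin d, 1 := sum_le_sum fun j _ => outDegree_permEdges_le_one _ v
      _ = d := by simp
  · calc _ ≤ ∑ j, inDegree (permEdges (ω j)) v := inDegree_biUnion_le _ _ v
      _ ≤ ∑ _j : Fin d, 1 := sum_le_sum fun j _ => inDegree_permEdges_le_one _ v
      _ = d := by simp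
  · intro S hS T hT hSc hTc
    have hSb : ∀ m ∈ S, m < b := fun m hm => mem_range.mp (hS hm)
    have hTb : ∀ m ∈ T, m < b := fun m hm => mem_range.mp (hT hm)
    obtain ⟨S₀, hS₀, hS₀c⟩ := exists_subset_card_eq
      (show s ≤ #(S.attachFin hSb) by rw [card_attachFin]; exact Nat.ceil_le.mpr hSc)
    obtain ⟨T₀, hT₀, hT₀c⟩ := exists_subset_card_eq
      (show s ≤ #(T.attachFin hTb) by rw [card_attachFin]; exact Nat.ceil_le.mpr hTc)
    obtain ⟨j, x, hx, hxT⟩ := hω S₀ T₀ hS₀c hT₀c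
    exact ⟨(x, ω j x), mem_biUnion.mpr ⟨j, mem_univ _, mem_image_of_mem _ (mem_univ x)⟩,
      (mem_attachFin hSb).mp (hS₀ hx), (mem_attachFin hTb).mp (hT₀ hxT)⟩

def shortEdges (n D : ℕ) : Finset (ℕ × ℕ) :=
  {e ∈ Icc 1 n ×ˢ Icc 1 n | e.1 < e.2 ∧ e.2 ≤ e.1 + D}

/-- A copy of `H` between every two blocks `[i * b, i * b + b)`, `[j * b, j * b + b)` with
`i < j ≤ i + D`; a point `x` sits at position `x % b` of block `x / b`. -/
def blockEdges (n b D : ℕ) (H : Finset (ℕ × ℕ)) : Finset (ℕ × ℕ) :=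
  {e ∈ Icc 1 n ×ˢ Icc 1 n |
    (e.1 % b, e.2 % b) ∈ H ∧ e.1 / b < e.2 / b ∧ e.2 / b ≤ e.1 / b + D}

def expanderDAG (n D : ℕ) (H : ℕ → Finset (ℕ × ℕ)) : Finset (ℕ × ℕ) :=
  shortEdges n D ∪ (range (Nat.log 2 n + 1)).biUnion fun k => blockEdges n (2 ^ k) D (H k)

theorem expanderDAG_edge {n D : ℕ} {H : ℕ → Finset (ℕ × ℕ)} {e : ℕ × ℕ}
    (he : e ∈ expanderDAG n D H) : 1 ≤ e.1 ∧ e.1 < e.2 ∧ e.2 ≤ n := by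
  simp only [expanderDAG, shortEdges, blockEdges, mem_union, mem_biUnion, mem_filter,
    mem_product, mem_Icc] at he
  rcases he with
    ⟨⟨⟨h1, -⟩, -, h2⟩, hlt, -⟩ | ⟨_, -, ⟨⟨h1, -⟩, -, h2⟩, -, hlt, -⟩
  · exact ⟨h1, hlt, h2⟩
  · exact ⟨h1, lt_of_not_ge fun h => (Nat.div_le_div_right h).not_gt hlt, h2⟩

theorem outDegree_shortEdges_le (n D v : ℕ) : outDegree (shortEdges n D) v ≤ D := by
  calc outDegree (shortEdges n D) v ≤ #(Ioc v (v + D)) :=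
        outDegree_le_card id Function.injective_id fun e he hv => by
          simp only [shortEdges, mem_filter] at he
          simp only [id, mem_Ioc]; omega
    _ = D := by simp

theorem inDegree_shortEdges_le (n D v : ℕ) : inDegree (shortEdges n D) v ≤ D := by
  calc inDegree (shortEdges n D) v ≤ #(Ico (v - D) v) :=
        inDegree_le_card id Function.injective_id fun e he hv => by
          simp only [shortEdges, mem_filter] at he
          simp only [id, mem_Ico]
          omega
    _ ≤ D := by rw [Nat.card_Ico]; omega

theorem divMod_injective (b : ℕ) : Function.Injective fun x : ℕ => (x / b, x % b) :=
  fun x y h => by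
    simp only [Prod.mk.injEq] at h
    rw [← Nat.div_add_mod x b, ← Nat.div_add_mod y b, h.1, h.2]

theorem outDegree_blockEdges_le {H : Finset (ℕ × ℕ)} {d : ℕ}
    (hH : ∀ x, outDegree H x ≤ d) (n b D v : ℕ) :
    outDegree (blockEdges n b D H) v ≤ D * d := by
  calc outDegree (blockEdges n b D H) v
      ≤ #(Ioc (v / b) (v / b + D) ×ˢ {p ∈ H | p.1 = v % b}.image Prod.snd) :=
        outDegree_le_card _ (divMod_injective b) fun e he hv => by
          simp only [blockEdges, mem_filter] at he
          subst hv
          simp only [mem_product, mem_Ioc, mem_image, mem_filter]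
          exact ⟨by omega, _, ⟨he.2.1, rfl⟩, rfl⟩
    _ ≤ D * d := by
      rw [card_product, Nat.card_Ioc, Nat.add_sub_cancel_left]
      exact Nat.mul_le_mul_left _ (card_image_le.trans (hH _))

theorem inDegree_blockEdges_le {H : Finset (ℕ × ℕ)} {d : ℕ} (hH : ∀ y, inDegree H y ≤ d)
    (n b D v : ℕ) : inDegree (blockEdges n b D H) v ≤ D * d := by
  calc inDegree (blockEdges n b D H) v
      ≤ #(Ico (v / b - D) (v / b) ×ˢ {p ∈ H | p.2 = v % b}.image Prod.fst) :=
        inDegree_le_card _ (divMod_injective b) fun e he hv => by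
          simp only [blockEdges, mem_filter] at he
          subst hv
          simp only [mem_product, mem_Ico, mem_image, mem_filter]
          refine ⟨?_, _, ⟨he.2.1, rfl⟩, rfl⟩
          have := he.2.2
          generalize e.1 / b = i at this ⊢
          generalize e.2 / b = j at this ⊢
          omega
    _ ≤ D * d := by
      rw [card_product, Nat.card_Ico]
      exact Nat.mul_le_mul (by omega) (card_image_le.trans (hH _))

theorem outDegree_expanderDAG_le {H : ℕ → Finset (ℕ × ℕ)} {d : ℕ}
    (hH : ∀ k x, outDegree (H k) x ≤ d) (n D v : ℕ) :
    outDegree (expanderDAG n D H) v ≤ D + (Nat.log 2 n + 1) * (D * d) := by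
  calc outDegree (expanderDAG n D H) v
      ≤ outDegree (shortEdges n D) v + ∑ k ∈ range (Nat.log 2 n + 1),
          outDegree (blockEdges n (2 ^ k) D (H k)) v :=
        (outDegree_union_le _ _ v).trans (Nat.add_le_add_left (outDegree_biUnion_le _ _ v) _)
    _ ≤ D + ∑ _k ∈ range (Nat.log 2 n + 1), D * d :=
        Nat.add_le_add (outDegree_shortEdges_le n D v)
          (sum_le_sum fun k _ => outDegree_blockEdges_le (hH k) n _ D v)
    _ = D + (Nat.log 2 n + 1) * (D * d) := by rw [sum_const, card_range, smul_eq_mul]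

theorem inDegree_expanderDAG_le {H : ℕ → Finset (ℕ × ℕ)} {d : ℕ}
    (hH : ∀ k y, inDegree (H k) y ≤ d) (n D v : ℕ) :
    inDegree (expanderDAG n D H) v ≤ D + (Nat.log 2 n + 1) * (D * d) := by
  calc inDegree (expanderDAG n D H) v
      ≤ inDegree (shortEdges n D) v + ∑ k ∈ range (Nat.log 2 n + 1),
          inDegree (blockEdges n (2 ^ k) D (H k)) v :=
        (inDegree_union_le _ _ v).trans (Nat.add_le_add_left (inDegree_biUnion_le _ _ v) _)
    _ ≤ D + ∑ _k ∈ range (Nat.log 2 n + 1), D * d :=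
        Nat.add_le_add (inDegree_shortEdges_le n D v)
          (sum_le_sum fun k _ => inDegree_blockEdges_le (hH k) n _ D v)
    _ = D + (Nat.log 2 n + 1) * (D * d) := by rw [sum_const, card_range, smul_eq_mul]

theorem shortEdges_subset_expanderDAG (n D : ℕ) (H : ℕ → Finset (ℕ × ℕ)) :
    shortEdges n D ⊆ expanderDAG n D H :=
  subset_union_left

theorem blockEdges_subset_expanderDAG {n D k : ℕ} (H : ℕ → Finset (ℕ × ℕ))
    (hk : k ≤ Nat.log 2 n) : blockEdges n (2 ^ k) D (H k) ⊆ expanderDAG n D H :=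
  (subset_biUnion_of_mem (fun k => blockEdges n (2 ^ k) D (H k))
    (mem_range.mpr (Nat.lt_succ_of_le hk))).trans subset_union_right

/-- The blocks `[i * b, i * b + b)` with `(v + b - 1) / b ≤ i < (v + r) / b` are those inside
`[v, v + r)`; outside them, `[v, v + r)` has fewer than `b` points at either end. -/
theorem card_le_card_filter_fullBlock_add {b v r : ℕ} (hb : 0 < b) {W : Finset ℕ}
    (hW : W ⊆ Ico v (v + r)) :
    #W ≤ #{x ∈ W | x / b ∈ Ico ((v + b - 1) / b) ((v + r) / b)} + 2 * b := by
  have cover : W ⊆ {x ∈ W | x / b ∈ Ico ((v + b - 1) / b) ((v + r) / b)} ∪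
      (Ico v (v + b) ∪ Ico (v + r - b) (v + r)) := by
    intro x hx
    by_cases hfull : x / b ∈ Ico ((v + b - 1) / b) ((v + r) / b)
    · exact mem_union_left _ (mem_filter.mpr ⟨hx, hfull⟩)
    refine mem_union_right _ ?_
    have hxI := mem_Ico.mp (hW hx)
    have x_lt := Nat.lt_div_mul_add (a := x) hb
    have x_ge := Nat.div_mul_le_self x b
    have lo_le := Nat.div_mul_le_self (v + b - 1) b
    have hi_gt := Nat.lt_div_mul_add (a := v + r) hb
    generalize (v + b - 1) / b = lo at *
    generalize (v + r) / b = hi at *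
    simp only [mem_union, mem_Ico] at hfull ⊢
    rcases lt_or_ge (x / b) lo with hlo | hhi
    · have := Nat.mul_le_mul_right b (Nat.succ_le_of_lt hlo)
      rw [Nat.succ_mul] at this
      omega
    · have := Nat.mul_le_mul_right b (not_lt.mp fun h => hfull ⟨hhi, h⟩)
      omega
  calc #W ≤ #{x ∈ W | x / b ∈ Ico ((v + b - 1) / b) ((v + r) / b)} +
        (#(Ico v (v + b)) + #(Ico (v + r - b) (v + r))) :=
        (card_le_card cover).trans
          ((card_union_le _ _).trans (Nat.add_le_add_left (card_union_le _ _) _))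
    _ ≤ _ := by simp only [Nat.card_Ico]; omega

theorem exists_dense_block {δ : ℝ} {b v r : ℕ} (hb : 0 < b) {W : Finset ℕ}
    (hW : W ⊆ Icc v (v + r - 1)) (hWcard : δ * r ≤ #W) (hbr : 4 * b ≤ δ * r) :
    ∃ i, v ≤ i * b ∧ i * b + b ≤ v + r ∧ δ / 2 * b ≤ #{x ∈ W | x / b = i} := by
  have hbR : (0 : ℝ) < b := by exact_mod_cast hb
  have hr : 1 ≤ r := by
    by_contra! h
    rw [Nat.lt_one_iff.mp h, Nat.cast_zero, mul_zero] at hbr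
    linarith
  have hδ : 0 < δ := by
    by_contra! h
    have : δ * r ≤ 0 := mul_nonpos_of_nonpos_of_nonneg h (Nat.cast_nonneg r)
    linarith
  have hW' : W ⊆ Ico v (v + r) := fun x hx => by
    have := mem_Icc.mp (hW hx)
    rw [mem_Ico]
    omega
  have few_outside := card_le_card_filter_fullBlock_add hb hW'
  have v_le_lo : v ≤ (v + b - 1) / b * b := by
    have := Nat.lt_div_mul_add (a := v + b - 1) hb
    omega
  have hi_le := Nat.div_mul_le_self (v + r) b
  generalize (v + b - 1) / b = lo at *
  generalize (v + r) / b = hi at *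
  set full := ({x ∈ W | x / b ∈ Ico lo hi} : Finset ℕ)
  have blocks_le : (#(Ico lo hi) * b : ℝ) ≤ r := by
    rw [Nat.card_Ico]
    exact_mod_cast (show (hi - lo) * b ≤ r by rw [Nat.sub_mul]; omega)
  have few_outside' : (#W : ℝ) ≤ #full + 2 * b := by exact_mod_cast few_outside
  obtain ⟨x₀, hx₀⟩ := card_pos.mp (show 0 < #full by
    have : (0 : ℝ) < #full := by nlinarith
    exact_mod_cast this)
  obtain ⟨i, hi_mem, hcard⟩ := exists_le_card_fiber_of_nsmul_le_card_of_maps_to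
    (f := (· / b)) (fun x hx => (mem_filter.mp hx).2) ⟨_, (mem_filter.mp hx₀).2⟩
    (show #(Ico lo hi) • (δ / 2 * b) ≤ (#full : ℝ) by rw [nsmul_eq_mul]; nlinarith)
  rw [mem_Ico] at hi_mem
  refine ⟨i, v_le_lo.trans (Nat.mul_le_mul_right _ hi_mem.1), ?_, hcard.trans ?_⟩
  · calc i * b + b = (i + 1) * b := by ring
      _ ≤ hi * b := Nat.mul_le_mul_right _ hi_mem.2
      _ ≤ v + r := hi_le
  · exact_mod_cast card_le_card (filter_subset_filter _ (filter_subset _ W))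

theorem exists_mem_blockEdges {γ : ℝ} {n b D i j : ℕ} {H : Finset (ℕ × ℕ)} (hb : 0 < b)
    (hH : IsBipartiteExpander γ b H) (hij : i < j) (hji : j ≤ i + D) {W X : Finset ℕ}
    (hW : W ⊆ Icc 1 n) (hX : X ⊆ Icc 1 n)
    (hWi : γ * b ≤ #{x ∈ W | x / b = i}) (hXj : γ * b ≤ #{y ∈ X | y / b = j}) :
    ∃ x ∈ W, ∃ y ∈ X, (x, y) ∈ blockEdges n b D H := by
  have card_mod (Y : Finset ℕ) (l : ℕ) :
      #({y ∈ Y | y / b = l}.image (· % b)) = #{y ∈ Y | y / b = l} :=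
    card_image_of_injOn fun y hy y' hy' h =>
      divMod_injective b (Prod.ext ((mem_filter.mp hy).2.trans (mem_filter.mp hy').2.symm) h)
  have mod_mem (Y : Finset ℕ) (l : ℕ) : {y ∈ Y | y / b = l}.image (· % b) ⊆ range b :=
    fun _ hy => by
      obtain ⟨y, -, rfl⟩ := mem_image.mp hy
      exact mem_range.mpr (Nat.mod_lt y hb)
  obtain ⟨⟨p₁, p₂⟩, hp, hp1, hp2⟩ := hH _ (mod_mem W i) _ (mod_mem X j)
    (by rwa [card_mod]) (by rwa [card_mod])
  obtain ⟨x, hx, rfl⟩ := mem_image.mp hp1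
  obtain ⟨y, hy, rfl⟩ := mem_image.mp hp2
  obtain ⟨hxW, rfl⟩ := mem_filter.mp hx
  obtain ⟨hyX, rfl⟩ := mem_filter.mp hy
  exact ⟨x, hxW, y, hyX,
    mem_filter.mpr ⟨mem_product.mpr ⟨hW hxW, hX hyX⟩, hp, hij, hji⟩⟩

theorem exists_forward_edge {δ : ℝ} {n D v r : ℕ} {H : ℕ → Finset (ℕ × ℕ)}
    (hδ : 0 < δ) (hD : 32 / δ ≤ D) (hH : ∀ k, IsBipartiteExpander (δ / 2) (2 ^ k) (H k))
    (hv : 1 ≤ v) (hr : 1 ≤ r) (hvr : v + 2 * r - 1 ≤ n) {W X : Finset ℕ}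
    (hW : W ⊆ Icc v (v + r - 1)) (hX : X ⊆ Icc (v + r) (v + 2 * r - 1))
    (hWcard : δ * r ≤ #W) (hXcard : δ * r ≤ #X) :
    ∃ a ∈ W, ∃ c ∈ X, (a, c) ∈ expanderDAG n D H := by
  have hrR : (1 : ℝ) ≤ r := by exact_mod_cast hr
  have hX' : X ⊆ Icc (v + r) (v + r + r - 1) := by
    rwa [show v + r + r - 1 = v + 2 * r - 1 by omega]
  have hWn : W ⊆ Icc 1 n := hW.trans (Icc_subset_Icc hv (by omega))
  have hXn : X ⊆ Icc 1 n := hX.trans (Icc_subset_Icc (by omega) hvr)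
  have hδr : 0 < δ * r := by positivity
  by_cases hshort : 2 * r ≤ D
  · obtain ⟨a, ha⟩ := card_pos.mp (by exact_mod_cast hδr.trans_le hWcard)
    obtain ⟨c, hc⟩ := card_pos.mp (by exact_mod_cast hδr.trans_le hXcard)
    have haI := mem_Icc.mp (hW ha)
    have hcI := mem_Icc.mp (hX hc)
    refine ⟨a, ha, c, hc, shortEdges_subset_expanderDAG n D H ?_⟩
    simp only [shortEdges, mem_filter, mem_product, mem_Icc]
    omega
  have hDδ : 32 ≤ D * δ := (div_le_iff₀ hδ).mp hD
  have hDr : (D : ℝ) < 2 * r := by exact_mod_cast not_le.mp hshort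
  obtain ⟨k, hk_le, hk_lt⟩ := exists_nat_pow_near (x := δ * r / 4) (by nlinarith) one_lt_two
  set b := 2 ^ k
  have hbR : ((b : ℕ) : ℝ) = 2 ^ k := by simp [b]
  have hb : 0 < b := Nat.two_pow_pos k
  have hb_le : 4 * (b : ℝ) ≤ δ * r := by rw [hbR]; linarith
  have hb_gt : δ * r < 8 * (b : ℝ) := by rw [hbR]; rw [pow_succ] at hk_lt; linarith
  obtain ⟨i, hvi, hiv, hWi⟩ := exists_dense_block hb hW hWcard hb_le
  obtain ⟨j, hvj, hjv, hXj⟩ := exists_dense_block hb hX' hXcard hb_le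
  have hij : i < j := Nat.lt_of_mul_lt_mul_right (a := b) (by omega)
  have hDb : 2 * r < D * b := by
    have : (2 * r : ℝ) < D * b := by nlinarith
    exact_mod_cast this
  have hji : j ≤ i + D := (Nat.lt_of_mul_lt_mul_right (a := b) (by rw [Nat.add_mul]; omega)).le
  have hkn : k ≤ Nat.log 2 n := Nat.le_log_of_pow_le one_lt_two (by omega)
  obtain ⟨x, hx, y, hy, hxy⟩ := exists_mem_blockEdges hb (hH k) hij hji hWn hXn hWi hXj
  exact ⟨x, hx, y, hy, blockEdges_subset_expanderDAG H hkn hxy⟩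

theorem localExpansionE_expanderDAG {δ : ℝ} {n D v : ℕ} {H : ℕ → Finset (ℕ × ℕ)}
    (hδ : 0 < δ) (hD : 32 / δ ≤ D) (hH : ∀ k, IsBipartiteExpander (δ / 2) (2 ^ k) (H k))
    (hv : v ∈ Icc 1 n) : LocalExpansionE n (expanderDAG n D H) δ v := by
  obtain ⟨hv1, hvn⟩ := mem_Icc.mp hv
  refine fun r hr => ⟨fun hvr W hW X hX hWc hXc =>
    exists_forward_edge hδ hD hH hv1 hr hvr hW hX hWc hXc, fun hrv Y hY Z hZ hYc hZc => ?_⟩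
  -- backward expansion around `v` is forward expansion around `v - 2 * r + 1`
  exact exists_forward_edge (v := v - 2 * r + 1) hδ hD hH (by omega) hr (by omega)
    (hZ.trans (Icc_subset_Icc le_rfl (by omega))) (hY.trans (Icc_subset_Icc (by omega) (by omega)))
    hZc hYc

theorem LocalExpansionE.mono {n v : ℕ} {E : Finset (ℕ × ℕ)} {δ δ' : ℝ} (h : δ ≤ δ')
    (hE : LocalExpansionE n E δ v) : LocalExpansionE n E δ' v := by
  intro r hr
  have hδr : δ * r ≤ δ' * r := by gcongr
  obtain ⟨forward, backward⟩ := hE r hr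
  exact ⟨fun hvr W hW X hX hWc hXc => forward hvr W hW X hX (hδr.trans hWc) (hδr.trans hXc),
    fun hrv Y hY Z hZ hYc hZc => backward hrv Y hY Z hZ (hδr.trans hYc) (hδr.trans hZc)⟩

theorem natCast_le_mul_logb {n D d m : ℕ} (hn : 2 ≤ n)
    (hm : m ≤ D + (Nat.log 2 n + 1) * (D * d)) :
    (m : ℝ) ≤ (D + 2 * D * d) * Real.logb 2 n := by
  have hlog : 1 ≤ Nat.log 2 n := Nat.log_pos one_lt_two hn
  have hm' : m ≤ (D + 2 * D * d) * Nat.log 2 n := by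
    calc m ≤ D + (Nat.log 2 n + 1) * (D * d) := hm
      _ ≤ D * Nat.log 2 n + (Nat.log 2 n + Nat.log 2 n) * (D * d) :=
          Nat.add_le_add (Nat.le_mul_of_pos_right D hlog) (Nat.mul_le_mul_right _ (by omega))
      _ = (D + 2 * D * d) * Nat.log 2 n := by ring
  calc (m : ℝ) ≤ ((D + 2 * D * d) * Nat.log 2 n : ℕ) := by exact_mod_cast hm'
    _ ≤ (D + 2 * D * d) * Real.logb 2 n := by
      push_cast
      gcongr
      exact_mod_cast Real.natLog_le_logb n 2

/-- For every `δ > 0` there is a constant `c > 0` such that, for every `n ≥ 2`,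
some DAG on `[n]` is a `δ`-local expander with indegree and outdegree at most
`c·log₂ n` at every node. -/
theorem local_expander_exists (δ : ℝ) (hδ : 0 < δ) :
    ∃ c : ℝ, 0 < c ∧ ∀ n : ℕ, 2 ≤ n →
      ∃ E : Finset (ℕ × ℕ),
        (∀ e ∈ E, 1 ≤ e.1 ∧ e.1 < e.2 ∧ e.2 ≤ n) ∧
        (∀ v ∈ Finset.Icc 1 n, LocalExpansionE n E δ v) ∧
        (∀ v : ℕ, (((E.filter fun e => e.2 = v).card : ℝ)) ≤ c * Real.logb 2 n) ∧
        (∀ v : ℕ, (((E.filter fun e => e.1 = v).card : ℝ)) ≤ c * Real.logb 2 n) := by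
  set δ₀ := min δ 1
  have hδ₀ : 0 < δ₀ := lt_min hδ one_pos
  set d := ⌈4 / (δ₀ / 2) ^ 2⌉₊
  set D := ⌈32 / δ₀⌉₊
  choose H hH_out hH_in hH_exp using fun k : ℕ =>
    exists_isBipartiteExpander (half_pos hδ₀) (by linarith [min_le_right δ 1])
      (Nat.le_ceil (4 / (δ₀ / 2) ^ 2)) (Nat.two_pow_pos k)
  refine ⟨D + 2 * D * d, by positivity, fun n hn => ⟨expanderDAG n D H,
    fun e he => expanderDAG_edge he,
    fun v hv =>
      (localExpansionE_expanderDAG hδ₀ (Nat.le_ceil _) hH_exp hv).mono (min_le_left δ 1),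
    fun v => natCast_le_mul_logb hn (inDegree_expanderDAG_le hH_in n D v),
    fun v => natCast_le_mul_logb hn (outDegree_expanderDAG_le hH_out n D v)⟩⟩
end

section
/- Let 0 < δ < 1/16 and let G be a DAG on [t] that has 4δ-local expansion around a node u. Then for every integer i ≥ 0 with u + 2^i − 1 ≤ t, the number of nodes in the interval [u, u + 2^i − 1] that are reachable from u by a directed path in G (counting u itself as reachable) is at least (3/4)·2^i. Symmetrically, for every integer i ≥ 0 with u − 2^i + 1 ≥ 1, the number of nodes in [u − 2^i + 1, u] from which u is reachable by a directed path in G is at least (3/4)·2^i. -/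
/-!
Induction on `i`. If at least `(3/4)·2^i` nodes of `[u, u + 2^i - 1]` are reachable from `u`,
then fewer than `4δ·2^i` nodes of the next block `[u + 2^i, u + 2^(i+1) - 1]` can be
unreachable: otherwise local expansion at scale `2^i` gives an edge from a reachable node to
an unreachable one. Hence at least `(3/4 + 1 - 4δ)·2^i ≥ (3/2)·2^i` nodes of
`[u, u + 2^(i+1) - 1]` are reachable, using `δ ≤ 1/16`. The backward statement is the same
argument for the reversed relation.
-/

/-- A DAG (edge relation `E` on `[t]`, edges go from smaller to larger) has
`δ`-local expansion around node `v`. -/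
def LocalExpansion (t : ℕ) (E : ℕ → ℕ → Prop) (δ : ℝ) (v : ℕ) : Prop :=
  ∀ r : ℕ, 1 ≤ r →
    (v + 2 * r - 1 ≤ t →
      ∀ W ⊆ Finset.Icc v (v + r - 1), ∀ X ⊆ Finset.Icc (v + r) (v + 2 * r - 1),
        δ * r ≤ (W.card : ℝ) → δ * r ≤ (X.card : ℝ) →
          ∃ a ∈ W, ∃ b ∈ X, E a b) ∧
    (2 * r ≤ v →
      ∀ Y ⊆ Finset.Icc (v - r + 1) v, ∀ Z ⊆ Finset.Icc (v - 2 * r + 1) (v - r),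
        δ * r ≤ (Y.card : ℝ) → δ * r ≤ (Z.card : ℝ) →
          ∃ a ∈ Z, ∃ b ∈ Y, E a b)

open Finset

theorem ncard_setOf_mem_and {α : Type*} (s : Finset α) (p : α → Prop) [DecidablePred p] :
    {w | w ∈ s ∧ p w}.ncard = #(s.filter p) := by
  rw [← Set.ncard_coe_finset, coe_filter]

section Expansion

variable {α : Type*} {R : α → α → Prop} {P : α → Prop} [DecidablePred P]

def BipartiteExpansion (R : α → α → Prop) (c : ℝ) (I J : Finset α) : Prop :=
  ∀ W ⊆ I, ∀ X ⊆ J, c ≤ (#W : ℝ) → c ≤ (#X : ℝ) → ∃ a ∈ W, ∃ b ∈ X, R a b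

theorem BipartiteExpansion.card_filter_not_lt {c : ℝ} {I J : Finset α}
    (hIJ : BipartiteExpansion R c I J) (hP : ∀ a b, P a → R a b → P b)
    (hc : c ≤ #(I.filter P)) : (#(J.filter (¬ P ·)) : ℝ) < c := by
  by_contra! hJ
  obtain ⟨a, ha, b, hb, hab⟩ :=
    hIJ (I.filter P) (filter_subset _ _) (J.filter (¬ P ·)) (filter_subset _ _) hc hJ
  exact (mem_filter.mp hb).2 (hP a b (mem_filter.mp ha).2 hab)

theorem BipartiteExpansion.card_filter_union_ge [DecidableEq α] {δ : ℝ} (hδ : δ ≤ 1 / 16)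
    {r : ℝ} {I J : Finset α} (hIJ : BipartiteExpansion R (4 * δ * r) I J) (hdisj : Disjoint I J)
    (hJ : #J = r) (hP : ∀ a b, P a → R a b → P b) (hI : 3 / 4 * r ≤ #(I.filter P)) :
    3 / 4 * (2 * r) ≤ #((I ∪ J).filter P) := by
  have hr : 0 ≤ r := hJ ▸ Nat.cast_nonneg _
  have hbad := hIJ.card_filter_not_lt hP (by nlinarith)
  have hsplit : (#(J.filter P) : ℝ) + #(J.filter (¬ P ·)) = r := by
    rw [← hJ]; exact_mod_cast card_filter_add_card_filter_not P
  rw [filter_union, card_union_of_disjoint (disjoint_filter_filter hdisj)]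
  push_cast
  nlinarith

theorem three_quarters_le_card_filter [DecidableEq α] {δ : ℝ} (hδ : δ ≤ 1 / 16)
    {I J : ℕ → Finset α} {u : α} (hu : u ∈ I 0) (hPu : P u) (hP : ∀ a b, P a → R a b → P b) {n : ℕ}
    (hsucc : ∀ j < n, I (j + 1) = I j ∪ J j) (hdisj : ∀ j < n, Disjoint (I j) (J j))
    (hJ : ∀ j < n, #(J j) = 2 ^ j)
    (hexp : ∀ j < n, BipartiteExpansion R (4 * δ * 2 ^ j) (I j) (J j)) :
    3 / 4 * 2 ^ n ≤ (#((I n).filter P) : ℝ) := by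
  induction n with
  | zero =>
    have : (1 : ℝ) ≤ #((I 0).filter P) := by
      exact_mod_cast card_pos.mpr ⟨u, mem_filter.mpr ⟨hu, hPu⟩⟩
    linarith
  | succ n ih =>
    have ih := ih (fun j hj ↦ hsucc j (by omega)) (fun j hj ↦ hdisj j (by omega))
      (fun j hj ↦ hJ j (by omega)) (fun j hj ↦ hexp j (by omega))
    rw [hsucc n n.lt_succ_self, pow_succ']
    exact (hexp n n.lt_succ_self).card_filter_union_ge hδ (hdisj n n.lt_succ_self)
      (by exact_mod_cast hJ n n.lt_succ_self) hP ih

end Expansion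

namespace LocalExpansion

variable {t : ℕ} {E : ℕ → ℕ → Prop} {δ : ℝ} {u : ℕ}

theorem bipartiteExpansion_right (hL : LocalExpansion t E δ u) {j : ℕ}
    (hj : u + 2 ^ (j + 1) - 1 ≤ t) :
    BipartiteExpansion E (δ * 2 ^ j) (Icc u (u + 2 ^ j - 1))
      (Icc (u + 2 ^ j) (u + 2 ^ (j + 1) - 1)) := by
  rw [pow_succ'] at hj ⊢
  exact_mod_cast (hL (2 ^ j) Nat.one_le_two_pow).1 hj

theorem bipartiteExpansion_left (hL : LocalExpansion t E δ u) {j : ℕ}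
    (hj : 2 ^ (j + 1) ≤ u) :
    BipartiteExpansion (flip E) (δ * 2 ^ j) (Icc (u - 2 ^ j + 1) u)
      (Icc (u - 2 ^ (j + 1) + 1) (u - 2 ^ j)) := by
  rw [pow_succ'] at hj ⊢
  intro W hW X hX hWc hXc
  obtain ⟨a, ha, b, hb, hab⟩ :=
    (hL (2 ^ j) Nat.one_le_two_pow).2 hj W hW X hX
      (by exact_mod_cast hWc) (by exact_mod_cast hXc)
  exact ⟨b, hb, a, ha, hab⟩

open Classical in
theorem three_quarters_le_card_reachable_right (hL : LocalExpansion t E (4 * δ) u)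
    (hδ : δ ≤ 1 / 16) {n : ℕ} (hn : u + 2 ^ n - 1 ≤ t) :
    3 / 4 * 2 ^ n ≤ (#((Icc u (u + 2 ^ n - 1)).filter (Relation.ReflTransGen E u)) : ℝ) := by
  have hpow : ∀ j < n, 2 ^ (j + 1) ≤ 2 ^ n := fun j hj ↦ Nat.pow_le_pow_right two_pos hj
  refine three_quarters_le_card_filter (J := fun j ↦ Icc (u + 2 ^ j) (u + 2 ^ (j + 1) - 1))
    hδ (by simp) .refl (fun _ _ ↦ .tail) (fun j _ ↦ ?_) (fun j _ ↦ ?_) (fun j _ ↦ ?_)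
    (fun j hj ↦ hL.bipartiteExpansion_right (by have := hpow j hj; omega))
  · have := @Nat.one_le_two_pow j
    ext; simp only [mem_union, mem_Icc, pow_succ]; omega
  · have := @Nat.one_le_two_pow j
    rw [disjoint_left]; simp only [mem_Icc]; omega
  · have := @Nat.one_le_two_pow j
    simp only [Nat.card_Icc, pow_succ]; omega

open Classical in
theorem three_quarters_le_card_reachable_left (hL : LocalExpansion t E (4 * δ) u)
    (hδ : δ ≤ 1 / 16) {n : ℕ} (hn : 2 ^ n ≤ u) :
    3 / 4 * 2 ^ n ≤ (#((Icc (u - 2 ^ n + 1) u).filter (Relation.ReflTransGen E · u)) : ℝ) := by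
  have hpow : ∀ j < n, 2 ^ (j + 1) ≤ 2 ^ n := fun j hj ↦ Nat.pow_le_pow_right two_pos hj
  refine three_quarters_le_card_filter (J := fun j ↦ Icc (u - 2 ^ (j + 1) + 1) (u - 2 ^ j))
    (R := flip E) (P := (Relation.ReflTransGen E · u)) hδ
    (by have := Nat.one_le_two_pow.trans hn; simp only [pow_zero, mem_Icc]; omega) .refl
    (fun _ _ h hab ↦ .head hab h) (fun j hj ↦ ?_) (fun j _ ↦ ?_) (fun j hj ↦ ?_)
    (fun j hj ↦ hL.bipartiteExpansion_left ((hpow j hj).trans hn))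
  · have := (hpow j hj).trans hn
    ext; simp only [mem_union, mem_Icc, pow_succ] at this ⊢; omega
  · have := @Nat.one_le_two_pow j
    rw [disjoint_left]; simp only [mem_Icc]; omega
  · have := (hpow j hj).trans hn
    simp only [Nat.card_Icc, pow_succ] at this ⊢; omega

end LocalExpansion

theorem expander_reachable_general (t : ℕ) (E : ℕ → ℕ → Prop)
    (δ : ℝ) (hδ : δ < 1 / 16)
    (u : ℕ)
    (hL : LocalExpansion t E (4 * δ) u) :
    (∀ i : ℕ, u + 2 ^ i - 1 ≤ t →
      (3 / 4 : ℝ) * 2 ^ i ≤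
        (({w : ℕ | w ∈ Finset.Icc u (u + 2 ^ i - 1) ∧
            Relation.ReflTransGen E u w} : Set ℕ).ncard : ℝ)) ∧
    (∀ i : ℕ, 2 ^ i ≤ u →
      (3 / 4 : ℝ) * 2 ^ i ≤
        (({w : ℕ | w ∈ Finset.Icc (u - 2 ^ i + 1) u ∧
            Relation.ReflTransGen E w u} : Set ℕ).ncard : ℝ)) := by
  classical
  refine ⟨fun i hi ↦ ?_, fun i hi ↦ ?_⟩
  · rw [ncard_setOf_mem_and]
    exact hL.three_quarters_le_card_reachable_right hδ.le hi
  · rw [ncard_setOf_mem_and]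
    exact hL.three_quarters_le_card_reachable_left hδ.le hi

/-- If `G` has `4δ`-local expansion around `u` (with `δ < 1/16`), then in every
dyadic interval `[u, u+2^i-1]` at least `(3/4)·2^i` nodes are reachable from `u`,
and in every dyadic interval `[u-2^i+1, u]` at least `(3/4)·2^i` nodes reach `u`. -/
theorem expander_reachable (t : ℕ) (E : ℕ → ℕ → Prop)
    (hE : ∀ a b, E a b → 1 ≤ a ∧ a < b ∧ b ≤ t)
    (δ : ℝ) (hδ0 : 0 < δ) (hδ : δ < 1 / 16)
    (u : ℕ) (hu : u ∈ Finset.Icc 1 t)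
    (hL : LocalExpansion t E (4 * δ) u) :
    (∀ i : ℕ, u + 2 ^ i - 1 ≤ t →
      (3 / 4 : ℝ) * 2 ^ i ≤
        (({w : ℕ | w ∈ Finset.Icc u (u + 2 ^ i - 1) ∧
            Relation.ReflTransGen E u w} : Set ℕ).ncard : ℝ)) ∧
    (∀ i : ℕ, 2 ^ i ≤ u →
      (3 / 4 : ℝ) * 2 ^ i ≤
        (({w : ℕ | w ∈ Finset.Icc (u - 2 ^ i + 1) u ∧
            Relation.ReflTransGen E w u} : Set ℕ).ncard : ℝ)) :=
  expander_reachable_general t E δ hδ u hL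
end

section
/- Let 0 < δ < 1/16, let G be a DAG on [t], and let u, v ∈ [t] satisfy v = u + 2r − 1 for some integer r ≥ 1. If G has 4δ-local expansion around u and around v, then G contains a directed path from u to v. -/
open Finset

/-- Expansion at scale `s`, with nodes indexed by their distance from the centre: `range s` is the
interval at the centre and `Ico s (2 * s)` the adjacent one. -/
def ScaleExpansion (R : ℕ → ℕ → Prop) (δ : ℝ) (s : ℕ) : Prop :=
  ∀ W ⊆ range s, ∀ X ⊆ Ico s (2 * s), δ * s ≤ #W → δ * s ≤ #X → ∃ a ∈ W, ∃ b ∈ X, R a b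

section Transfer

variable {t : ℕ} {E : ℕ → ℕ → Prop} {δ : ℝ}

theorem LocalExpansion.scaleExpansion_right {u s : ℕ}
    (h : LocalExpansion t E δ u) (hs : 1 ≤ s) (ht : u + 2 * s - 1 ≤ t) :
    ScaleExpansion (fun i j => E (u + i) (u + j)) δ s := by
  intro W hW X hX hWc hXc
  have hcard (A : Finset ℕ) : #(A.image (u + ·)) = #A :=
    card_image_of_injective _ (add_right_injective u)
  obtain ⟨_, ha, _, hb, hab⟩ := (h s hs).1 ht (W.image (u + ·))
    (fun _ hx => by
      obtain ⟨i, hi, rfl⟩ := mem_image.1 hx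
      have := mem_range.1 (hW hi); rw [mem_Icc]; omega)
    (X.image (u + ·))
    (fun _ hx => by
      obtain ⟨i, hi, rfl⟩ := mem_image.1 hx
      have := mem_Ico.1 (hX hi); rw [mem_Icc]; omega)
    (by rwa [hcard]) (by rwa [hcard])
  obtain ⟨i, hi, rfl⟩ := mem_image.1 ha
  obtain ⟨j, hj, rfl⟩ := mem_image.1 hb
  exact ⟨i, hi, j, hj, hab⟩

theorem LocalExpansion.scaleExpansion_left {v s : ℕ}
    (h : LocalExpansion t E δ v) (hs : 1 ≤ s) (hv : 2 * s ≤ v) :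
    ScaleExpansion (fun i j => E (v - j) (v - i)) δ s := by
  intro W hW X hX hWc hXc
  have hcard (A : Finset ℕ) (hA : ∀ i ∈ A, i ≤ v) : #(A.image (v - ·)) = #A :=
    card_image_of_injOn fun i hi j hj hij => by
      have := hA i hi; have := hA j hj; omega
  obtain ⟨_, ha, _, hb, hab⟩ := (h s hs).2 hv (W.image (v - ·))
    (fun _ hx => by
      obtain ⟨i, hi, rfl⟩ := mem_image.1 hx
      have := mem_range.1 (hW hi); rw [mem_Icc]; omega)
    (X.image (v - ·))
    (fun _ hx => by
      obtain ⟨i, hi, rfl⟩ := mem_image.1 hx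
      have := mem_Ico.1 (hX hi); rw [mem_Icc]; omega)
    (by rwa [hcard W fun i hi => by have := mem_range.1 (hW hi); omega])
    (by rwa [hcard X fun i hi => by have := mem_Ico.1 (hX hi); omega])
  obtain ⟨j, hj, rfl⟩ := mem_image.1 ha
  obtain ⟨i, hi, rfl⟩ := mem_image.1 hb
  exact ⟨i, hi, j, hj, hab⟩

theorem LocalExpansion.exists_edge_to_mirror {u r : ℕ}
    (h : LocalExpansion t E δ u) (hr : 1 ≤ r) (ht : u + 2 * r - 1 ≤ t) {A B : Finset ℕ}
    (hA : A ⊆ range r) (hB : B ⊆ range r) (hAc : δ * r ≤ #A) (hBc : δ * r ≤ #B) :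
    ∃ i ∈ A, ∃ j ∈ B, E (u + i) (u + 2 * r - 1 - j) := by
  have hmirror : #(B.image (2 * r - 1 - ·)) = #B :=
    card_image_of_injOn fun i hi j hj (hij : 2 * r - 1 - i = 2 * r - 1 - j) => by
      have := mem_range.1 (hB hi); have := mem_range.1 (hB hj); omega
  obtain ⟨i, hi, _, hmem, hij⟩ := h.scaleExpansion_right hr ht A hA (B.image (2 * r - 1 - ·))
    (fun _ hx => by
      obtain ⟨j, hj, rfl⟩ := mem_image.1 hx
      have := mem_range.1 (hB hj); rw [mem_Ico]; omega)
    hAc (by rwa [hmirror])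
  obtain ⟨j, hj, rfl⟩ := mem_image.1 hmem
  refine ⟨i, hi, j, hj, ?_⟩
  have := mem_range.1 (hB hj)
  rwa [show u + 2 * r - 1 - j = u + (2 * r - 1 - j) by omega]

end Transfer

section Doubling

variable {R : ℕ → ℕ → Prop} {P : ℕ → Prop} [DecidablePred P] {δ : ℝ}

theorem lt_card_filter_range_two_mul (hP : ∀ i j, P i → R i j → P j) {s : ℕ}
    (hR : ScaleExpansion R δ s) (hs : δ * s ≤ #((range s).filter P)) :
    s < #((range (2 * s)).filter P) := by
  have hgap : (#((Ico s (2 * s)).filter (¬ P ·)) : ℝ) < δ * s := by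
    by_contra! hX
    obtain ⟨a, ha, b, hb, hab⟩ := hR _ (filter_subset _ _) _ (filter_subset _ _) hs hX
    exact (mem_filter.1 hb).2 (hP a b (mem_filter.1 ha).2 hab)
  have hsplit : (range (2 * s)).filter P = (range s).filter P ∪ (Ico s (2 * s)).filter P := by
    rw [← filter_union, range_eq_Ico, range_eq_Ico, Ico_union_Ico_eq_Ico (by omega) (by omega)]
  have hdisj : Disjoint ((range s).filter P) ((Ico s (2 * s)).filter P) :=
    disjoint_filter_filter (by rw [range_eq_Ico]; exact Ico_disjoint_Ico_consecutive 0 s _)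
  have hhalf : (#((Ico s (2 * s)).filter P) : ℝ) + #((Ico s (2 * s)).filter (¬ P ·)) = s := by
    rw [← Nat.cast_add, card_filter_add_card_filter_not, Nat.card_Ico, two_mul,
      Nat.add_sub_cancel]
  rw [hsplit, card_union_of_disjoint hdisj]
  have : (s : ℝ) < #((range s).filter P) + #((Ico s (2 * s)).filter P) := by linarith
  exact_mod_cast this

theorem mul_le_card_filter_range (hδ : δ < 1 / 4) (h0 : P 0) (hP : ∀ i j, P i → R i j → P j)
    {r : ℕ} (hR : ∀ s, 0 < s → s < r → ScaleExpansion R δ s) :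
    ∀ s, 0 < s → s ≤ r → δ * s ≤ #((range s).filter P) := by
  intro s
  induction s using Nat.strong_induction_on with
  | _ s ih =>
  intro hs hsr
  obtain rfl | hs2 : s = 1 ∨ 2 ≤ s := by omega
  · have : (range 1).filter P = {0} := by simp [h0]
    simp only [this, card_singleton, Nat.cast_one]
    linarith
  obtain ⟨s', hs'⟩ : ∃ s', s ≤ 2 * s' ∧ 2 * s' ≤ s + 1 := ⟨(s + 1) / 2, by omega, by omega⟩
  have hdouble := lt_card_filter_range_two_mul hP (hR s' (by omega) (by omega))
    (ih s' (by omega) (by omega) (by omega))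
  have hsub : (range (2 * s')).filter P ⊆ insert s ((range s).filter P) := by
    intro i hi
    simp only [mem_filter, mem_range, mem_insert] at hi ⊢
    obtain h | h := Nat.lt_or_ge i s
    · exact .inr ⟨h, hi.2⟩
    · exact .inl (by omega)
  have hle : s' ≤ #((range s).filter P) := by
    have := (card_le_card hsub).trans (card_insert_le _ _)
    omega
  have : (s : ℝ) ≤ 2 * s' := by exact_mod_cast (by omega : s ≤ 2 * s')
  have : (0 : ℝ) ≤ s := s.cast_nonneg
  calc δ * s ≤ s / 4 := by nlinarith
    _ ≤ s' := by linarith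
    _ ≤ _ := by exact_mod_cast hle

end Doubling

theorem expansion_connected_general (t : ℕ) (E : ℕ → ℕ → Prop)
    (δ : ℝ) (hδ : δ < 1 / 16)
    (u v r : ℕ) (hr : 1 ≤ r)
    (hv : v ∈ Finset.Icc 1 t)
    (hvu : v = u + 2 * r - 1)
    (hLu : LocalExpansion t E (4 * δ) u) (hLv : LocalExpansion t E (4 * δ) v) :
    Relation.ReflTransGen E u v := by
  classical
  have hvt := (mem_Icc.1 hv).2
  have hδ4 : 4 * δ < 1 / 4 := by linarith
  have hFwd := mul_le_card_filter_range hδ4 (P := fun i => Relation.ReflTransGen E u (u + i))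
    .refl (fun _ _ hi hij => hi.tail hij)
    (fun s hs hsr => hLu.scaleExpansion_right hs (by omega)) r (by omega) le_rfl
  have hBwd := mul_le_card_filter_range hδ4 (P := fun i => Relation.ReflTransGen E (v - i) v)
    .refl (fun _ _ hi hij => hi.head hij)
    (fun s hs hsr => hLv.scaleExpansion_left hs (by omega)) r (by omega) le_rfl
  obtain ⟨i, hi, j, hj, hij⟩ :=
    hLu.exists_edge_to_mirror hr (by omega) (filter_subset _ _) (filter_subset _ _) hFwd hBwd
  rw [← hvu] at hij
  exact ((mem_filter.1 hi).2.tail hij).trans (mem_filter.1 hj).2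

/-- If `0 < δ < 1/16`, `v = u + 2r - 1`, and `G` has `4δ`-local expansion around
both `u` and `v`, then `G` contains a directed path from `u` to `v`. -/
theorem expansion_connected (t : ℕ) (E : ℕ → ℕ → Prop)
    (hE : ∀ a b, E a b → 1 ≤ a ∧ a < b ∧ b ≤ t)
    (δ : ℝ) (hδ0 : 0 < δ) (hδ : δ < 1 / 16)
    (u v r : ℕ) (hr : 1 ≤ r)
    (hu : u ∈ Finset.Icc 1 t) (hv : v ∈ Finset.Icc 1 t)
    (hvu : v = u + 2 * r - 1)
    (hLu : LocalExpansion t E (4 * δ) u) (hLv : LocalExpansion t E (4 * δ) v) :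
    Relation.ReflTransGen E u v :=
  expansion_connected_general t E δ hδ u v r hr hv hvu hLu hLv
end

section
/- Let δ > 0 and let r ≥ 1 be an integer. Let A and B be disjoint finite sets with |A| = |B| = r, and let E ⊆ A × B be an edge set such that the bipartite graph (A, B, E) is a δ-expander. Let E_g ⊆ E be any subset (the green edges) and let E_red = E ∖ E_g (the red edges). If the bipartite graph (A, B, E_g) is not a 4δ-expander, then |E_red| ≥ 3δr. -/
/-! Take `X ⊆ A`, `Y ⊆ B` of size at least `4δr` with no green edge between them. As long as
both sides still have at least `δr` vertices, the expansion of `E` yields an edge between them,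
necessarily red; deleting its two endpoints and repeating produces a red matching of size at
least `3δr`. -/

/-- The bipartite graph `(A, B, E)` with `E ⊆ A × B` is a `δ`-expander:
any `X ⊆ A` with `|X| ≥ δ|A|` and `Y ⊆ B` with `|Y| ≥ δ|B|` are joined by an edge. -/
def BipExpander (A B : Finset ℕ) (E : Finset (ℕ × ℕ)) (δ : ℝ) : Prop :=
  ∀ X ⊆ A, ∀ Y ⊆ B, δ * A.card ≤ (X.card : ℝ) → δ * B.card ≤ (Y.card : ℝ) →
    ∃ e ∈ E, e.1 ∈ X ∧ e.2 ∈ Y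

theorem not_bipExpander_iff {A B : Finset ℕ} {E : Finset (ℕ × ℕ)} {δ : ℝ} :
    ¬ BipExpander A B E δ ↔ ∃ X ⊆ A, ∃ Y ⊆ B,
      δ * A.card ≤ (X.card : ℝ) ∧ δ * B.card ≤ (Y.card : ℝ) ∧ Disjoint E (X ×ˢ Y) := by
  simp only [BipExpander, Finset.disjoint_left, Finset.mem_product]
  push Not
  rfl

theorem BipExpander.min_sub_le_card_inter_product {A B : Finset ℕ} {E : Finset (ℕ × ℕ)}
    {δ : ℝ} (hE : BipExpander A B E δ) {X Y : Finset ℕ} (hX : X ⊆ A) (hY : Y ⊆ B) :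
    min ((X.card : ℝ) - δ * A.card) (Y.card - δ * B.card) ≤ (E ∩ X ×ˢ Y).card := by
  induction X using Finset.strongInduction generalizing Y with
  | H X ih =>
  rcases le_or_gt (min ((X.card : ℝ) - δ * A.card) (Y.card - δ * B.card)) 0 with h | h
  · exact h.trans (Nat.cast_nonneg _)
  rw [lt_min_iff, sub_pos, sub_pos] at h
  obtain ⟨e, he, hx, hy⟩ := hE X hX Y hY h.1.le h.2.le
  have he' : e ∈ E ∩ X ×ˢ Y := Finset.mem_inter.2 ⟨he, Finset.mem_product.2 ⟨hx, hy⟩⟩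
  -- Removing both endpoints of an edge lowers both slacks by one and loses that edge.
  have hsub : E ∩ X.erase e.1 ×ˢ Y.erase e.2 ⊆ (E ∩ X ×ˢ Y).erase e := by
    intro f hf
    simp only [Finset.mem_inter, Finset.mem_product, Finset.mem_erase] at hf ⊢
    exact ⟨fun h => hf.2.1.1 (congrArg Prod.fst h), hf.1, hf.2.1.2, hf.2.2.2⟩
  have hrec := ih _ (Finset.erase_ssubset hx) ((Finset.erase_subset _ _).trans hX)
    (Y := Y.erase e.2) ((Finset.erase_subset _ _).trans hY)
  have hcard := Finset.card_le_card hsub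
  rw [← Nat.cast_le (α := ℝ)] at hcard
  rw [← Finset.card_erase_add_one hx, ← Finset.card_erase_add_one hy,
    ← Finset.card_erase_add_one he']
  push_cast
  rw [add_sub_right_comm, add_sub_right_comm (Y.erase e.2).card.cast, min_add_add_right]
  linarith

theorem red_edges_of_not_expander_general (δ : ℝ) (r : ℕ)
    (A B : Finset ℕ) (hA : A.card = r) (hB : B.card = r)
    (E : Finset (ℕ × ℕ))
    (Eg : Finset (ℕ × ℕ))
    (hExp : BipExpander A B E δ)
    (hNot : ¬ BipExpander A B Eg (4 * δ)) :
    3 * δ * r ≤ ((E \ Eg).card : ℝ) := by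
  obtain ⟨X, hX, Y, hY, hXcard, hYcard, hgreen⟩ := not_bipExpander_iff.1 hNot
  have hred : E ∩ X ×ˢ Y ⊆ E \ Eg :=
    Finset.subset_sdiff.2 ⟨Finset.inter_subset_left,
      hgreen.symm.mono_left Finset.inter_subset_right⟩
  calc 3 * δ * r ≤ min ((X.card : ℝ) - δ * A.card) (Y.card - δ * B.card) := by
        rw [hA] at hXcard ⊢
        rw [hB] at hYcard ⊢
        exact le_min (by linarith) (by linarith)
    _ ≤ (E ∩ X ×ˢ Y).card := hExp.min_sub_le_card_inter_product hX hY
    _ ≤ (E \ Eg).card := by exact_mod_cast Finset.card_le_card hred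

/-- If `(A, B, E)` is a `δ`-expander with `|A| = |B| = r`, `E_g ⊆ E`, and
`(A, B, E_g)` is not a `4δ`-expander, then there are at least `3δr` red edges,
i.e. `|E \ E_g| ≥ 3δr`. -/
theorem red_edges_of_not_expander (δ : ℝ) (hδ : 0 < δ) (r : ℕ) (hr : 1 ≤ r)
    (A B : Finset ℕ) (hAB : Disjoint A B) (hA : A.card = r) (hB : B.card = r)
    (E : Finset (ℕ × ℕ)) (hE : E ⊆ A ×ˢ B)
    (Eg : Finset (ℕ × ℕ)) (hEg : Eg ⊆ E)
    (hExp : BipExpander A B E δ)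
    (hNot : ¬ BipExpander A B Eg (4 * δ)) :
    3 * δ * r ≤ ((E \ Eg).card : ℝ) :=
  red_edges_of_not_expander_general δ r A B hA hB E Eg hExp hNot
end

section
/- Let Σ = {0,1}, let a, c ≥ 1 be integers, and let H : Σ* → Σ* be an arbitrary function. Let G be a DAG on [n] in which each node v is equipped with an ordered list parents(v) = (p_1, …, p_{d_v}) of nodes all smaller than v. Let x, x' : [n] → Σ^a and ℓ, ℓ' : [n] → Σ^c be functions such that for every node v, ℓ(v) = H(x(v) ∘ ℓ(p_1) ∘ ⋯ ∘ ℓ(p_{d_v})), where (p_1, …, p_{d_v}) = parents(v) and ∘ denotes string concatenation. Call a node v green if ℓ'(v) = H(x'(v) ∘ ℓ'(p_1) ∘ ⋯ ∘ ℓ'(p_{d_v})). Suppose v_0, v_1, …, v_m are nodes such that v_j ∈ parents(v_{j+1}) for every 0 ≤ j < m, every node v_j (0 ≤ j ≤ m) is green, and ℓ'(v_m) = ℓ(v_m). Then either there exist distinct strings s ≠ s' in Σ* with H(s) = H(s') (a hash collision), or for every 0 ≤ j ≤ m we have x'(v_j) = x(v_j) and ℓ'(v_j) = ℓ(v_j).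 -/
/-!
Without a collision `H` is injective, so a green node whose label is correct has correct
input string `x'(v) ∘ ℓ'(p₁) ∘ ⋯`. Since all data blocks and all labels have fixed lengths,
this concatenation splits uniquely, giving `x'(v) = x(v)` and correct labels at every parent.
Correctness of the label therefore propagates backwards along the path from `v_m` to `v_0`.
-/

theorem List.forall_mem_eq_of_flatten_map_eq {α β : Type*} {f g : α → List β} :
    ∀ {ps : List α}, (∀ p ∈ ps, (f p).length = (g p).length) →
      (ps.map f).flatten = (ps.map g).flatten → ∀ p ∈ ps, f p = g p
  | [], _, _ => by simp
  | q :: ps, hlen, hflat => by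
    simp only [List.map_cons, List.flatten_cons] at hflat
    obtain ⟨hq, hrest⟩ := List.append_inj hflat (hlen q List.mem_cons_self)
    have ih := forall_mem_eq_of_flatten_map_eq
      (fun p hp => hlen p (List.mem_cons_of_mem q hp)) hrest
    exact List.forall_mem_cons.mpr ⟨hq, ih⟩

theorem inputs_eq_of_label_eq {H : List Bool → List Bool} (hH : Function.Injective H)
    {parents : ℕ → List ℕ} {x x' ℓ ℓ' : ℕ → List Bool} {v : ℕ}
    (hxlen : (x' v).length = (x v).length)
    (hℓlen : ∀ p ∈ parents v, (ℓ' p).length = (ℓ p).length)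
    (hlab : ℓ v = H (x v ++ ((parents v).map ℓ).flatten))
    (hgreen : ℓ' v = H (x' v ++ ((parents v).map ℓ').flatten))
    (heq : ℓ' v = ℓ v) :
    x' v = x v ∧ ∀ p ∈ parents v, ℓ' p = ℓ p := by
  have hinput := hH (hgreen.symm.trans (heq.trans hlab))
  obtain ⟨hx, hflat⟩ := List.append_inj hinput hxlen
  exact ⟨hx, List.forall_mem_eq_of_flatten_map_eq hℓlen hflat⟩

theorem green_path_correct_general (a c : ℕ)
    (H : List Bool → List Bool)
    (parents : ℕ → List ℕ)
    (x x' ℓ ℓ' : ℕ → List Bool)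
    (hxa : ∀ v, (x v).length = a) (hx'a : ∀ v, (x' v).length = a)
    (hlc : ∀ v, (ℓ v).length = c) (hl'c : ∀ v, (ℓ' v).length = c)
    -- the honest labeling rule
    (hlab : ∀ v, ℓ v = H (x v ++ ((parents v).map ℓ).flatten))
    (m : ℕ) (vs : ℕ → ℕ)
    -- consecutive path nodes: `vs j` is a parent of `vs (j+1)`
    (hpath : ∀ j < m, vs j ∈ parents (vs (j + 1)))
    -- every node on the path is green (locally consistent for `(x', ℓ')`)
    (hgreen : ∀ j ≤ m, ℓ' (vs j) = H (x' (vs j) ++ ((parents (vs j)).map ℓ').flatten))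
    -- the final label is correct
    (hlast : ℓ' (vs m) = ℓ (vs m)) :
    (∃ s s' : List Bool, s ≠ s' ∧ H s = H s') ∨
      (∀ j ≤ m, x' (vs j) = x (vs j) ∧ ℓ' (vs j) = ℓ (vs j)) := by
  rw [or_iff_not_imp_left]
  intro hcol
  have hH : Function.Injective H := fun s s' h => by_contra fun hne => hcol ⟨s, s', hne, h⟩
  have hstep : ∀ j ≤ m, ℓ' (vs j) = ℓ (vs j) →
      x' (vs j) = x (vs j) ∧ ∀ p ∈ parents (vs j), ℓ' p = ℓ p := fun j hj =>
    inputs_eq_of_label_eq hH (by rw [hx'a, hxa]) (fun p _ => by rw [hl'c, hlc])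
      (hlab (vs j)) (hgreen j hj)
  have hlabel : ∀ j ≤ m, ℓ' (vs j) = ℓ (vs j) := fun j hj =>
    Nat.decreasingInduction (motive := fun j _ => ℓ' (vs j) = ℓ (vs j))
      (fun k hk ih => (hstep (k + 1) hk ih).2 (vs k) (hpath k hk)) hlast hj
  exact fun j hj => ⟨(hstep j hj (hlabel j hj)).1, hlabel j hj⟩

/-- Along a directed path of green (locally consistent) nodes whose final label
is correct, either all data values and labels on the path are correct, or a
hash collision exists. -/
theorem green_path_correct (n a c : ℕ) (ha : 1 ≤ a) (hc : 1 ≤ c)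
    (H : List Bool → List Bool)
    (parents : ℕ → List ℕ)
    (hpar : ∀ v ∈ Finset.Icc 1 n, ∀ p ∈ parents v, 1 ≤ p ∧ p < v)
    (x x' ℓ ℓ' : ℕ → List Bool)
    (hxa : ∀ v, (x v).length = a) (hx'a : ∀ v, (x' v).length = a)
    (hlc : ∀ v, (ℓ v).length = c) (hl'c : ∀ v, (ℓ' v).length = c)
    -- the honest labeling rule
    (hlab : ∀ v, ℓ v = H (x v ++ ((parents v).map ℓ).flatten))
    (m : ℕ) (vs : ℕ → ℕ)
    (hvs : ∀ j ≤ m, vs j ∈ Finset.Icc 1 n)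
    -- consecutive path nodes: `vs j` is a parent of `vs (j+1)`
    (hpath : ∀ j < m, vs j ∈ parents (vs (j + 1)))
    -- every node on the path is green (locally consistent for `(x', ℓ')`)
    (hgreen : ∀ j ≤ m, ℓ' (vs j) = H (x' (vs j) ++ ((parents (vs j)).map ℓ').flatten))
    -- the final label is correct
    (hlast : ℓ' (vs m) = ℓ (vs m)) :
    (∃ s s' : List Bool, s ≠ s' ∧ H s = H s') ∨
      (∀ j ≤ m, x' (vs j) = x (vs j) ∧ ℓ' (vs j) = ℓ (vs j)) :=
  green_path_correct_general a c H parents x x' ℓ ℓ' hxa hx'a hlc hl'c hlab m vs hpath hgreen hlast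
end
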